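/- For any finite discrete random variables Y, X₁, X₂: |I(Y;X₁) − I(Y;X₂)| ≤ max(H(X₁),H(X₂)) − I(X₁;X₂) = max(H(X₁|X₂), H(X₂|X₁)) = D_I(X₁,X₂). -/
import Mathlib

open Real

/-- Shannon entropy of a discrete random variable `X` on a finite probability
space with weights `p`. -/
noncomputable def ent {Ω S : Type*} [Fintype Ω] [Fintype S] [DecidableEq S]
    (p : Ω → ℝ) (X : Ω → S) : ℝ :=
  ∑ s : S, Real.negMulLog (∑ ω ∈ Finset.univ.filter (fun ω => X ω = s), p ω)

/-- Conditional entropy `H(X|Y) = H(X,Y) - H(Y)`. -/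
noncomputable def condEnt {Ω S T : Type*} [Fintype Ω] [Fintype S] [Fintype T]
    [DecidableEq S] [DecidableEq T] (p : Ω → ℝ) (X : Ω → S) (Y : Ω → T) : ℝ :=
  ent p (fun ω => (X ω, Y ω)) - ent p Y

/-- Mutual information `I(X;Y) = H(X) + H(Y) - H(X,Y)`. -/
noncomputable def mutualInfo {Ω S T : Type*} [Fintype Ω] [Fintype S] [Fintype T]
    [DecidableEq S] [DecidableEq T] (p : Ω → ℝ) (X : Ω → S) (Y : Ω → T) : ℝ :=
  ent p X + ent p Y - ent p (fun ω => (X ω, Y ω))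

section Aux

variable {Ω : Type*} [Fintype Ω]

/-- Probability mass of the fiber `X = s`. -/
noncomputable def mass {S : Type*} [DecidableEq S] (p : Ω → ℝ) (X : Ω → S) (s : S) : ℝ :=
  ∑ ω ∈ Finset.univ.filter (fun ω => X ω = s), p ω

lemma ent_eq_sum_mass {S : Type*} [Fintype S] [DecidableEq S] (p : Ω → ℝ) (X : Ω → S) :
    ent p X = ∑ s : S, Real.negMulLog (mass p X s) := rfl

lemma mass_nonneg {S : Type*} [DecidableEq S] {p : Ω → ℝ} (hp0 : ∀ ω, 0 ≤ p ω)
    (X : Ω → S) (s : S) : 0 ≤ mass p X s :=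
  Finset.sum_nonneg fun ω _ => hp0 ω

lemma sum_mass {S : Type*} [Fintype S] [DecidableEq S] {p : Ω → ℝ} (hp1 : ∑ ω, p ω = 1)
    (X : Ω → S) : ∑ s : S, mass p X s = 1 := by
  rw [← hp1]; exact Finset.sum_fiberwise _ _ _

lemma mass_congr {S S' : Type*} [DecidableEq S] [DecidableEq S'] (p : Ω → ℝ)
    {X : Ω → S} {X' : Ω → S'} {v : S} {v' : S'} (h : ∀ ω, X ω = v ↔ X' ω = v') :
    mass p X v = mass p X' v' := by
  unfold mass
  refine Finset.sum_congr ?_ fun _ _ => rfl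
  ext ω
  simp [h ω]

/-- Summing the second coordinate of a pair mass gives the first marginal. -/
lemma mass_marginal_fst {V W : Type*} [Fintype W] [DecidableEq V] [DecidableEq W]
    (p : Ω → ℝ) (X : Ω → V) (F : Ω → W) (v : V) :
    ∑ w : W, mass p (fun ω => (X ω, F ω)) (v, w) = mass p X v := by
  unfold mass
  rw [← Finset.sum_fiberwise (Finset.univ.filter (fun ω => X ω = v)) F p]
  refine Finset.sum_congr rfl fun w _ => Finset.sum_congr ?_ fun _ _ => rfl
  ext ω
  simp only [Finset.mem_filter, Finset.filter_filter, Finset.mem_univ, true_and,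
    Prod.mk.injEq]
  try tauto

/-- Summing the first coordinate of a pair mass gives the second marginal. -/
lemma mass_marginal_snd {V W : Type*} [Fintype V] [DecidableEq V] [DecidableEq W]
    (p : Ω → ℝ) (X : Ω → V) (F : Ω → W) (w : W) :
    ∑ v : V, mass p (fun ω => (X ω, F ω)) (v, w) = mass p F w := by
  unfold mass
  rw [← Finset.sum_fiberwise (Finset.univ.filter (fun ω => F ω = w)) X p]
  refine Finset.sum_congr rfl fun v _ => Finset.sum_congr ?_ fun _ _ => rfl
  ext ω
  simp only [Finset.mem_filter, Finset.filter_filter, Finset.mem_univ, true_and,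
    Prod.mk.injEq]
  try tauto

lemma ent_comp_equiv {V W : Type*} [Fintype V] [Fintype W] [DecidableEq V] [DecidableEq W]
    (p : Ω → ℝ) (e : V ≃ W) (X : Ω → V) :
    ent p (fun ω => e (X ω)) = ent p X := by
  rw [ent_eq_sum_mass, ent_eq_sum_mass]
  exact (Fintype.sum_equiv e _ _ fun v => by
    rw [mass_congr p (fun ω => (e.injective.eq_iff (a := X ω) (b := v)).symm)]).symm

lemma ent_swap {V W : Type*} [Fintype V] [Fintype W] [DecidableEq V] [DecidableEq W]
    (p : Ω → ℝ) (X : Ω → V) (Y : Ω → W) :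
    ent p (fun ω => (X ω, Y ω)) = ent p (fun ω => (Y ω, X ω)) := by
  have := ent_comp_equiv p (Equiv.prodComm V W) (fun ω => (X ω, Y ω))
  simpa using this.symm

lemma negMulLog_sum_le {ι : Type*} (s : Finset ι) (a : ι → ℝ) (ha : ∀ i ∈ s, 0 ≤ a i) :
    Real.negMulLog (∑ i ∈ s, a i) ≤ ∑ i ∈ s, Real.negMulLog (a i) := by
  simp only [Real.negMulLog, neg_mul, ← Finset.sum_neg_distrib, ← Finset.sum_mul]
  rw [Finset.sum_mul]
  refine Finset.sum_le_sum fun i hi => ?_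
  simp only [neg_mul, neg_le_neg_iff]
  rcases eq_or_lt_of_le (ha i hi) with h | h
  · rw [← h]; simp
  · refine mul_le_mul_of_nonneg_left ?_ (ha i hi)
    exact Real.log_le_log h (Finset.single_le_sum ha hi)

lemma ent_fst_le {V W : Type*} [Fintype V] [Fintype W] [DecidableEq V] [DecidableEq W]
    {p : Ω → ℝ} (hp0 : ∀ ω, 0 ≤ p ω) (X : Ω → V) (F : Ω → W) :
    ent p X ≤ ent p (fun ω => (X ω, F ω)) := by
  rw [ent_eq_sum_mass, ent_eq_sum_mass, Fintype.sum_prod_type]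
  refine Finset.sum_le_sum fun v _ => ?_
  rw [← mass_marginal_fst p X F v]
  exact negMulLog_sum_le _ _ fun w _ => mass_nonneg hp0 _ _

/-- Finite Gibbs' inequality. -/
lemma gibbs {V : Type*} [Fintype V] {r q : V → ℝ} (hr0 : ∀ v, 0 ≤ r v)
    (hq0 : ∀ v, 0 ≤ q v) (hrq : ∀ v, 0 < r v → 0 < q v)
    (hr1 : ∑ v, r v = 1) (hq1 : ∑ v, q v ≤ 1) :
    ∑ v, r v * Real.log (q v) ≤ ∑ v, r v * Real.log (r v) := by
  have key : ∀ v, r v - q v ≤ r v * Real.log (r v) - r v * Real.log (q v) := by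
    intro v
    rcases eq_or_lt_of_le (hr0 v) with h | h
    · rw [← h]; simpa using hq0 v
    · have hq := hrq v h
      have hlog : Real.log (q v / r v) ≤ q v / r v - 1 :=
        Real.log_le_sub_one_of_pos (div_pos hq h)
      rw [Real.log_div (ne_of_gt hq) (ne_of_gt h)] at hlog
      have := mul_le_mul_of_nonneg_left hlog (le_of_lt h)
      rw [mul_sub, mul_sub, mul_div_cancel₀ _ (ne_of_gt h), mul_one] at this
      linarith
  have := Finset.sum_le_sum fun v (_ : v ∈ Finset.univ) => key v
  rw [Finset.sum_sub_distrib, Finset.sum_sub_distrib, hr1] at this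
  linarith

end Aux

section Submod

variable {Ω S T U : Type*} [Fintype Ω] [Fintype S] [Fintype T] [Fintype U]
  [DecidableEq S] [DecidableEq T] [DecidableEq U]

lemma ent_submodular (p : Ω → ℝ) (hp0 : ∀ ω, 0 ≤ p ω) (hp1 : ∑ ω, p ω = 1)
    (A : Ω → S) (B : Ω → T) (C : Ω → U) :
    ent p C + ent p (fun ω => (A ω, B ω, C ω)) ≤
      ent p (fun ω => (A ω, C ω)) + ent p (fun ω => (B ω, C ω)) := by
  set r : S × T × U → ℝ := mass p (fun ω => (A ω, B ω, C ω)) with hr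
  set b : S × U → ℝ := mass p (fun ω => (A ω, C ω)) with hb
  set c : T × U → ℝ := mass p (fun ω => (B ω, C ω)) with hc
  set a : U → ℝ := mass p C with ha
  have hr0 : ∀ v, 0 ≤ r v := fun v => mass_nonneg hp0 _ _
  have hb0 : ∀ v, 0 ≤ b v := fun v => mass_nonneg hp0 _ _
  have hc0 : ∀ v, 0 ≤ c v := fun v => mass_nonneg hp0 _ _
  have ha0 : ∀ u, 0 ≤ a u := fun u => mass_nonneg hp0 _ _
  -- marginals
  have hcm : ∀ t u, ∑ s, r (s, t, u) = c (t, u) := fun t u =>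
    mass_marginal_snd p A (fun ω => (B ω, C ω)) (t, u)
  have hbm : ∀ s u, ∑ t, r (s, t, u) = b (s, u) := by
    intro s u
    have h1 : ∀ t, r (s, t, u) = mass p (fun ω => (B ω, A ω, C ω)) (t, s, u) := by
      intro t
      exact mass_congr p fun ω => by simp [Prod.ext_iff]; tauto
    simp only [h1]
    exact mass_marginal_snd p B (fun ω => (A ω, C ω)) (s, u)
  have ham : ∀ u, ∑ s, b (s, u) = a u := fun u => mass_marginal_snd p A C u
  have ham' : ∀ u, ∑ t, c (t, u) = a u := fun u => mass_marginal_snd p B C u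
  have hr1 : ∑ v, r v = 1 := sum_mass hp1 _
  have ha1 : ∑ u, a u = 1 := sum_mass hp1 _
  -- pointwise bounds
  have hrb : ∀ s t u, r (s, t, u) ≤ b (s, u) := fun s t u => by
    rw [← hbm s u]
    exact Finset.single_le_sum (f := fun t => r (s, t, u)) (fun t _ => hr0 _) (Finset.mem_univ t)
  have hrc : ∀ s t u, r (s, t, u) ≤ c (t, u) := fun s t u => by
    rw [← hcm t u]
    exact Finset.single_le_sum (f := fun s => r (s, t, u)) (fun s _ => hr0 _) (Finset.mem_univ s)
  have hba : ∀ s u, b (s, u) ≤ a u := fun s u => by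
    rw [← ham u]
    exact Finset.single_le_sum (f := fun s => b (s, u)) (fun s _ => hb0 _) (Finset.mem_univ s)
  set q : S × T × U → ℝ := fun v => b (v.1, v.2.2) * c (v.2.1, v.2.2) / a v.2.2 with hq
  have hq0 : ∀ v, 0 ≤ q v := fun v =>
    div_nonneg (mul_nonneg (hb0 _) (hc0 _)) (ha0 _)
  have hrq : ∀ v, 0 < r v → 0 < q v := by
    rintro ⟨s, t, u⟩ hv
    have hbpos : 0 < b (s, u) := lt_of_lt_of_le hv (hrb s t u)
    have hcpos : 0 < c (t, u) := lt_of_lt_of_le hv (hrc s t u)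
    have hapos : 0 < a u := lt_of_lt_of_le hbpos (hba s u)
    exact div_pos (mul_pos hbpos hcpos) hapos
  have inner : ∀ s u, ∑ t, q (s, t, u) = b (s, u) * (a u / a u) := by
    intro s u
    have h1 : ∑ t, q (s, t, u) = b (s, u) / a u * ∑ t, c (t, u) := by
      rw [Finset.mul_sum]
      exact Finset.sum_congr rfl fun t _ => by simp only [hq]; ring
    rw [h1, ham' u]
    ring
  have hq1 : ∑ v, q v ≤ 1 := by
    have expand : ∑ v : S × T × U, q v = ∑ s, ∑ t, ∑ u, q (s, t, u) := by
      simp [Fintype.sum_prod_type]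
    rw [expand]
    have h2 : ∀ s, ∑ t, ∑ u, q (s, t, u) = ∑ u, b (s, u) * (a u / a u) := by
      intro s
      rw [Finset.sum_comm]
      exact Finset.sum_congr rfl fun u _ => inner s u
    simp only [h2]
    rw [Finset.sum_comm, ← ha1]
    refine Finset.sum_le_sum fun u _ => ?_
    rcases eq_or_lt_of_le (ha0 u) with h | h
    · simp [← h]
    · rw [div_self (ne_of_gt h)]
      simp only [mul_one, ham u, le_refl]
  have main := gibbs hr0 hq0 hrq hr1 hq1
  -- rewrite LHS of gibbs
  have hsplit : ∑ v, r v * Real.log (q v) =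
      (∑ v, r v * Real.log (b (v.1, v.2.2))) + (∑ v, r v * Real.log (c (v.2.1, v.2.2)))
        - ∑ v, r v * Real.log (a v.2.2) := by
    rw [← Finset.sum_add_distrib, ← Finset.sum_sub_distrib]
    refine Finset.sum_congr rfl fun v _ => ?_
    rcases eq_or_lt_of_le (hr0 v) with h | h
    · rw [← h]; ring
    · obtain ⟨s, t, u⟩ := v
      have hbpos : 0 < b (s, u) := lt_of_lt_of_le h (hrb s t u)
      have hcpos : 0 < c (t, u) := lt_of_lt_of_le h (hrc s t u)
      have hapos : 0 < a u := lt_of_lt_of_le hbpos (hba s u)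
      simp only [hq]
      rw [Real.log_div (ne_of_gt (mul_pos hbpos hcpos)) (ne_of_gt hapos),
        Real.log_mul (ne_of_gt hbpos) (ne_of_gt hcpos)]
      ring
  have hsb : ∑ v : S × T × U, r v * Real.log (b (v.1, v.2.2)) =
      ∑ w : S × U, b w * Real.log (b w) := by
    simp only [Fintype.sum_prod_type]
    refine Finset.sum_congr rfl fun s _ => ?_
    rw [Finset.sum_comm]
    refine Finset.sum_congr rfl fun u _ => ?_
    rw [← Finset.sum_mul, hbm s u]
  have hsc : ∑ v : S × T × U, r v * Real.log (c (v.2.1, v.2.2)) =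
      ∑ w : T × U, c w * Real.log (c w) := by
    simp only [Fintype.sum_prod_type]
    rw [Finset.sum_comm]
    refine Finset.sum_congr rfl fun t _ => ?_
    rw [Finset.sum_comm]
    refine Finset.sum_congr rfl fun u _ => ?_
    rw [← Finset.sum_mul, hcm t u]
  have hsa : ∑ v : S × T × U, r v * Real.log (a v.2.2) =
      ∑ u : U, a u * Real.log (a u) := by
    simp only [Fintype.sum_prod_type]
    have h3 : ∀ s : S, ∑ t, ∑ u, r (s, t, u) * Real.log (a u) =
        ∑ u, b (s, u) * Real.log (a u) := by
      intro s
      rw [Finset.sum_comm]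
      refine Finset.sum_congr rfl fun u _ => ?_
      rw [← Finset.sum_mul, hbm s u]
    simp only [h3]
    rw [Finset.sum_comm]
    refine Finset.sum_congr rfl fun u _ => ?_
    rw [← Finset.sum_mul, ham u]
  rw [hsplit, hsb, hsc, hsa] at main
  have hentr : ent p (fun ω => (A ω, B ω, C ω)) = -∑ v, r v * Real.log (r v) := by
    rw [ent_eq_sum_mass, ← Finset.sum_neg_distrib]
    exact Finset.sum_congr rfl fun v _ => by simp [Real.negMulLog, hr]
  have hentb : ent p (fun ω => (A ω, C ω)) = -∑ w, b w * Real.log (b w) := by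
    rw [ent_eq_sum_mass, ← Finset.sum_neg_distrib]
    exact Finset.sum_congr rfl fun v _ => by simp [Real.negMulLog, hb]
  have hentc : ent p (fun ω => (B ω, C ω)) = -∑ w, c w * Real.log (c w) := by
    rw [ent_eq_sum_mass, ← Finset.sum_neg_distrib]
    exact Finset.sum_congr rfl fun v _ => by simp [Real.negMulLog, hc]
  have henta : ent p C = -∑ u, a u * Real.log (a u) := by
    rw [ent_eq_sum_mass, ← Finset.sum_neg_distrib]
    exact Finset.sum_congr rfl fun v _ => by simp [Real.negMulLog, ha]
  rw [hentr, hentb, hentc, henta]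
  linarith

/-- Key entropy inequality: `H(Y,X₁) + H(X₂) ≤ H(Y,X₂) + H(X₁,X₂)`. -/
lemma ent_key (p : Ω → ℝ) (hp0 : ∀ ω, 0 ≤ p ω) (hp1 : ∑ ω, p ω = 1)
    (Y : Ω → S) (X₁ : Ω → T) (X₂ : Ω → U) :
    ent p (fun ω => (Y ω, X₁ ω)) + ent p X₂ ≤
      ent p (fun ω => (Y ω, X₂ ω)) + ent p (fun ω => (X₁ ω, X₂ ω)) := by
  have h1 : ent p (fun ω => (Y ω, X₁ ω)) ≤ ent p (fun ω => ((Y ω, X₁ ω), X₂ ω)) :=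
    ent_fst_le hp0 _ X₂
  have h2 : ent p (fun ω => ((Y ω, X₁ ω), X₂ ω)) = ent p (fun ω => (Y ω, X₁ ω, X₂ ω)) := by
    have := ent_comp_equiv p (Equiv.prodAssoc S T U) (fun ω => ((Y ω, X₁ ω), X₂ ω))
    simpa [Equiv.prodAssoc] using this.symm
  have h3 := ent_submodular p hp0 hp1 Y X₁ X₂
  linarith

end Submod

theorem mutualInfo_diff_le_DI {Ω S T U : Type*} [Fintype Ω] [Fintype S] [Fintype T]
    [Fintype U] [DecidableEq S] [DecidableEq T] [DecidableEq U]
    (p : Ω → ℝ) (hp0 : ∀ ω, 0 ≤ p ω) (hp1 : ∑ ω, p ω = 1)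
    (Y : Ω → S) (X₁ : Ω → T) (X₂ : Ω → U) :
    |mutualInfo p Y X₁ - mutualInfo p Y X₂| ≤
        max (ent p X₁) (ent p X₂) - mutualInfo p X₁ X₂ ∧
      max (ent p X₁) (ent p X₂) - mutualInfo p X₁ X₂ =
        max (condEnt p X₁ X₂) (condEnt p X₂ X₁) := by
  have hswap : ent p (fun ω => (X₂ ω, X₁ ω)) = ent p (fun ω => (X₁ ω, X₂ ω)) :=
    ent_swap p X₂ X₁
  constructor
  · rw [abs_sub_le_iff]
    have k1 := ent_key p hp0 hp1 Y X₂ X₁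
    have k2 := ent_key p hp0 hp1 Y X₁ X₂
    have m1 : ent p X₁ ≤ max (ent p X₁) (ent p X₂) := le_max_left _ _
    have m2 : ent p X₂ ≤ max (ent p X₁) (ent p X₂) := le_max_right _ _
    rw [hswap] at k1
    constructor
    · simp only [mutualInfo]; linarith
    · simp only [mutualInfo]; linarith
  · have e1 : ent p X₁ - mutualInfo p X₁ X₂ = condEnt p X₁ X₂ := by
      simp only [mutualInfo, condEnt]; ring
    have e2 : ent p X₂ - mutualInfo p X₁ X₂ = condEnt p X₂ X₁ := by
      simp only [mutualInfo, condEnt, hswap]; ring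
    rw [← e1, ← e2, max_sub_sub_right]
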